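/- (Quadratic rate of asymptotic regularity) In the Tikhonov-Mann setting, let λ ∈ (0,1] and take λ_n = λ and β_n = 1 − 1/(n+1) for every n ∈ ℕ, and let K ∈ ℕ satisfy K ≥ M. Then Σ₀(k) = 144K²(k+1)² + 6K(k+1) is a rate of asymptotic regularity for (x_n), i.e., d(x_n,x_{n+1}) ≤ 1/(k+1) for all k ∈ ℕ and all n ≥ Σ₀(k). -/

import Mathlib

/-!
The iterates stay in the ball of radius `M` around the fixed point `p`, so `d(u, xₙ) ≤ 2M`.
Comparing two consecutive steps with (W4) and (W2) gives, for `aₙ = d(xₙ, xₙ₊₁)` and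
`βₙ = 1 - 1/(n+1)`, the recurrence `(n+1) aₙ₊₁ ≤ n aₙ + 2M/(n+2)`. Since
`1/(n+2) ≤ 2(√(n+2) - √(n+1))`, it telescopes to `n aₙ ≤ 4M√(n+1)`, and
`4K(k+1)√(n+1) ≤ n` as soon as `n ≥ 144K²(k+1)² + 6K(k+1)`.
-/

/-- A `W`-hyperbolic space: a metric space together with a convexity mapping
`W x y l` (written `(1-l)x + l y` in the paper) satisfying (W1)-(W4). -/
structure WHyp (X : Type*) [MetricSpace X] where
  W : X → X → ℝ → X
  W1 : ∀ x y z : X, ∀ l ∈ Set.Icc (0:ℝ) 1,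
    dist z (W x y l) ≤ (1 - l) * dist z x + l * dist z y
  W2 : ∀ x y : X, ∀ l ∈ Set.Icc (0:ℝ) 1, ∀ l' ∈ Set.Icc (0:ℝ) 1,
    dist (W x y l) (W x y l') = |l - l'| * dist x y
  W3 : ∀ x y : X, ∀ l ∈ Set.Icc (0:ℝ) 1, W x y l = W y x (1 - l)
  W4 : ∀ x y z w : X, ∀ l ∈ Set.Icc (0:ℝ) 1,
    dist (W x z l) (W y w l) ≤ (1 - l) * dist x y + l * dist z w

namespace WHyp

variable {X : Type*} [MetricSpace X] (H : WHyp X)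

theorem dist_W_le {x y z : X} {l r : ℝ} (hl : l ∈ Set.Icc (0:ℝ) 1)
    (hx : dist z x ≤ r) (hy : dist z y ≤ r) : dist z (H.W x y l) ≤ r :=
  calc dist z (H.W x y l) ≤ (1 - l) * dist z x + l * dist z y := H.W1 x y z l hl
    _ ≤ (1 - l) * r + l * r := by gcongr <;> linarith [hl.1, hl.2]
    _ = r := by ring

theorem dist_W_W_le {u x x' : X} {l l' : ℝ} (hl : l ∈ Set.Icc (0:ℝ) 1)
    (hl' : l' ∈ Set.Icc (0:ℝ) 1) :
    dist (H.W u x l) (H.W u x' l') ≤ l * dist x x' + |l - l'| * dist u x' :=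
  calc dist (H.W u x l) (H.W u x' l')
      ≤ dist (H.W u x l) (H.W u x' l) + dist (H.W u x' l) (H.W u x' l') := dist_triangle _ _ _
    _ ≤ ((1 - l) * dist u u + l * dist x x') + |l - l'| * dist u x' :=
      add_le_add (H.W4 u u x x' l hl) (H.W2 u x' l hl l' hl').le
    _ = l * dist x x' + |l - l'| * dist u x' := by rw [dist_self]; ring

theorem dist_W_W_le_of_dist_le {x y z w : X} {l : ℝ} (hl : l ∈ Set.Icc (0:ℝ) 1)
    (h : dist z w ≤ dist x y) : dist (H.W x z l) (H.W y w l) ≤ dist x y :=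
  calc dist (H.W x z l) (H.W y w l) ≤ (1 - l) * dist x y + l * dist z w := H.W4 x y z w l hl
    _ ≤ (1 - l) * dist x y + l * dist x y := by gcongr; exact hl.1
    _ = dist x y := by ring

end WHyp

theorem one_div_le_two_mul_sqrt_sub_sqrt {t : ℝ} (ht : 0 ≤ t) :
    1 / (t + 1) ≤ 2 * (√(t + 1) - √t) := by
  have ha : √(t + 1) ^ 2 = t + 1 := Real.sq_sqrt (by linarith)
  have hb : √t ^ 2 = t := Real.sq_sqrt ht
  have hb0 : 0 ≤ √t := Real.sqrt_nonneg t
  have hba : √t ≤ √(t + 1) := Real.sqrt_le_sqrt (by linarith)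
  have ha1 : 1 ≤ √(t + 1) := Real.one_le_sqrt.mpr (by linarith)
  rw [div_le_iff₀ (by linarith)]
  nlinarith [mul_le_mul_of_nonneg_left hba (sub_nonneg.2 hba)]

theorem le_two_mul_sqrt_of_succ_le_add {s : ℕ → ℝ} {c : ℝ} (hc : 0 ≤ c) (h0 : s 0 ≤ 0)
    (hs : ∀ n : ℕ, s (n + 1) ≤ s n + c / (n + 2)) (n : ℕ) :
    s n ≤ 2 * c * (√(n + 1) - 1) := by
  induction n with
  | zero => simpa using h0
  | succ n ih =>
    have hstep : c / (n + 2) ≤ c * (2 * (√(n + 1 + 1) - √(n + 1))) := by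
      rw [show (n : ℝ) + 2 = n + 1 + 1 by ring, div_eq_mul_one_div]
      exact mul_le_mul_of_nonneg_left (one_div_le_two_mul_sqrt_sub_sqrt (by positivity)) hc
    push_cast
    linarith [hs n]

theorem four_mul_mul_sqrt_le {A n : ℝ} (hA : 0 ≤ A) (hn : 144 * A ^ 2 + 6 * A ≤ n) :
    4 * A * √(n + 1) ≤ n := by
  have hn0 : 0 ≤ n := by nlinarith
  refine le_of_sq_le_sq ?_ hn0
  rw [mul_pow, Real.sq_sqrt (by linarith)]
  nlinarith

theorem le_one_div_of_mul_le_four_mul_sqrt {a m : ℝ} {K k n : ℕ} (hm : m ≤ K) (hK : 0 < K)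
    (hn : 144 * K ^ 2 * (k + 1) ^ 2 + 6 * K * (k + 1) ≤ n) (ha : n * a ≤ 4 * m * (√(n + 1) - 1)) :
    a ≤ 1 / (k + 1) := by
  have hA : (0 : ℝ) < K * (k + 1) := by positivity
  have hnA : 144 * ((K : ℝ) * (k + 1)) ^ 2 + 6 * ((K : ℝ) * (k + 1)) ≤ n := by
    have := (Nat.cast_le (α := ℝ)).2 hn
    push_cast at this
    linarith
  have hn0 : (0 : ℝ) < n := by nlinarith
  have hs : 1 ≤ √((n : ℝ) + 1) := Real.one_le_sqrt.mpr (by linarith)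
  have hmK : 4 * m * (√((n : ℝ) + 1) - 1) ≤ 4 * K * √((n : ℝ) + 1) := by nlinarith
  rw [le_div_iff₀ (by positivity)]
  refine le_of_mul_le_mul_left ?_ hn0
  calc (n : ℝ) * (a * (k + 1)) = n * a * (k + 1) := by ring
    _ ≤ 4 * K * √((n : ℝ) + 1) * (k + 1) := by gcongr ?_ * _; exact ha.trans hmK
    _ = 4 * (K * (k + 1)) * √((n : ℝ) + 1) := by ring
    _ ≤ n * 1 := by rw [mul_one]; exact four_mul_mul_sqrt_le hA.le hnA

structure IsTikhonovMann {X : Type*} [MetricSpace X] (H : WHyp X) (C : Set X) (T : X → X)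
    (u : X) (lam beta : ℕ → ℝ) (x y : ℕ → X) : Prop where
  convex : ∀ a ∈ C, ∀ b ∈ C, ∀ t ∈ Set.Icc (0:ℝ) 1, H.W a b t ∈ C
  mapsTo : ∀ a ∈ C, T a ∈ C
  nonexpansive : ∀ a ∈ C, ∀ b ∈ C, dist (T a) (T b) ≤ dist a b
  u_mem : u ∈ C
  lam_mem : ∀ n, lam n ∈ Set.Icc (0:ℝ) 1
  beta_mem : ∀ n, beta n ∈ Set.Icc (0:ℝ) 1
  x_zero_mem : x 0 ∈ C
  y_eq : ∀ n, y n = H.W u (x n) (beta n)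
  x_succ : ∀ n, x (n + 1) = H.W (y n) (T (y n)) (lam n)

namespace IsTikhonovMann

variable {X : Type*} [MetricSpace X] {H : WHyp X} {C : Set X} {T : X → X} {u : X}
  {lam beta : ℕ → ℝ} {x y : ℕ → X}

theorem x_mem (hTM : IsTikhonovMann H C T u lam beta x y) (n : ℕ) : x n ∈ C := by
  induction n with
  | zero => exact hTM.x_zero_mem
  | succ n ih =>
    have hy : y n ∈ C := hTM.y_eq n ▸ hTM.convex u hTM.u_mem (x n) ih (beta n) (hTM.beta_mem n)
    exact hTM.x_succ n ▸ hTM.convex _ hy _ (hTM.mapsTo _ hy) (lam n) (hTM.lam_mem n)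

theorem y_mem (hTM : IsTikhonovMann H C T u lam beta x y) (n : ℕ) : y n ∈ C :=
  hTM.y_eq n ▸ hTM.convex u hTM.u_mem (x n) (hTM.x_mem n) (beta n) (hTM.beta_mem n)

theorem dist_x_le (hTM : IsTikhonovMann H C T u lam beta x y) {p : X} (hpC : p ∈ C)
    (hTp : T p = p) {r : ℝ} (hx0 : dist (x 0) p ≤ r) (hu : dist u p ≤ r) (n : ℕ) :
    dist (x n) p ≤ r := by
  induction n with
  | zero => exact hx0
  | succ n ih =>
    have hy : dist p (y n) ≤ r := hTM.y_eq n ▸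
      H.dist_W_le (hTM.beta_mem n) (dist_comm u p ▸ hu) (dist_comm (x n) p ▸ ih)
    have hTy : dist p (T (y n)) ≤ r :=
      calc dist p (T (y n)) = dist (T p) (T (y n)) := by rw [hTp]
        _ ≤ dist p (y n) := hTM.nonexpansive p hpC (y n) (hTM.y_mem n)
        _ ≤ r := hy
    rw [dist_comm, hTM.x_succ n]
    exact H.dist_W_le (hTM.lam_mem n) hy hTy

theorem dist_x_succ_succ_le (hTM : IsTikhonovMann H C T u lam beta x y) {n : ℕ}
    (hlam : lam (n + 1) = lam n) :
    dist (x (n + 1)) (x (n + 2)) ≤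
      beta n * dist (x n) (x (n + 1)) + |beta n - beta (n + 1)| * dist u (x (n + 1)) :=
  calc dist (x (n + 1)) (x (n + 2)) ≤ dist (y n) (y (n + 1)) := by
        rw [hTM.x_succ n, hTM.x_succ (n + 1), hlam]
        exact H.dist_W_W_le_of_dist_le (hTM.lam_mem n)
          (hTM.nonexpansive _ (hTM.y_mem n) _ (hTM.y_mem (n + 1)))
    _ ≤ _ := by
        rw [hTM.y_eq n, hTM.y_eq (n + 1)]
        exact H.dist_W_W_le (hTM.beta_mem n) (hTM.beta_mem (n + 1))

theorem succ_mul_dist_le (hTM : IsTikhonovMann H C T u lam beta x y) {p : X} (hpC : p ∈ C)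
    (hTp : T p = p) {r : ℝ} (hx0 : dist (x 0) p ≤ r) (hu : dist u p ≤ r)
    (hlam : ∀ n, lam (n + 1) = lam n) (hbeta : ∀ n : ℕ, beta n = 1 - 1 / (n + 1)) (n : ℕ) :
    (n + 1) * dist (x (n + 1)) (x (n + 2)) ≤ n * dist (x n) (x (n + 1)) + 2 * r / (n + 2) := by
  have hux : dist u (x (n + 1)) ≤ 2 * r :=
    calc dist u (x (n + 1)) ≤ dist u p + dist (x (n + 1)) p := dist_triangle_right _ _ _
      _ ≤ 2 * r := by linarith [hTM.dist_x_le hpC hTp hx0 hu (n + 1)]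
  have hgap : |beta n - beta (n + 1)| = 1 / ((n + 1) * (n + 2)) := by
    rw [hbeta, hbeta, abs_sub_comm, abs_of_nonneg (by push_cast; field_simp; linarith)]
    push_cast
    field_simp
    ring
  have hstep := hTM.dist_x_succ_succ_le (hlam n)
  rw [hgap, hbeta n] at hstep
  calc (n + 1) * dist (x (n + 1)) (x (n + 2))
      ≤ (n + 1) * ((1 - 1 / (n + 1)) * dist (x n) (x (n + 1)) +
          1 / ((n + 1) * (n + 2)) * (2 * r)) := by
        gcongr
        linarith [mul_le_mul_of_nonneg_left hux (by positivity : (0 : ℝ) ≤ 1 / ((n + 1) * (n + 2)))]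
    _ = n * dist (x n) (x (n + 1)) + 2 * r / (n + 2) := by
        field_simp
        ring

theorem natCast_mul_dist_le (hTM : IsTikhonovMann H C T u lam beta x y) {p : X} (hpC : p ∈ C)
    (hTp : T p = p) {r : ℝ} (hx0 : dist (x 0) p ≤ r) (hu : dist u p ≤ r)
    (hlam : ∀ n, lam (n + 1) = lam n) (hbeta : ∀ n : ℕ, beta n = 1 - 1 / (n + 1)) (n : ℕ) :
    n * dist (x n) (x (n + 1)) ≤ 4 * r * (√(n + 1) - 1) := by
  have h := le_two_mul_sqrt_of_succ_le_add (s := fun n : ℕ ↦ n * dist (x n) (x (n + 1)))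
    (c := 2 * r) (by linarith [dist_nonneg (x := u) (y := p)]) (by simp)
    (fun n ↦ by push_cast; exact hTM.succ_mul_dist_le hpC hTp hx0 hu hlam hbeta n) n
  linarith

end IsTikhonovMann

theorem tm_quadratic_as_reg_general
    {X : Type*} [MetricSpace X] (H : WHyp X) (C : Set X)
    (hCconv : ∀ x ∈ C, ∀ y ∈ C, ∀ l ∈ Set.Icc (0:ℝ) 1, H.W x y l ∈ C)
    (T : X → X) (hTmaps : ∀ x ∈ C, T x ∈ C)
    (hTne : ∀ x ∈ C, ∀ y ∈ C, dist (T x) (T y) ≤ dist x y)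
    (p : X) (hpC : p ∈ C) (hpfix : T p = p)
    (u : X) (huC : u ∈ C)
    (lam beta : ℕ → ℝ)
    (hlam : ∀ n, lam n ∈ Set.Icc (0:ℝ) 1) (hbeta : ∀ n, beta n ∈ Set.Icc (0:ℝ) 1)
    (x y : ℕ → X) (hx0 : x 0 ∈ C)
    (hy : ∀ n, y n = H.W u (x n) (beta n))
    (hx : ∀ n, x (n + 1) = H.W (y n) (T (y n)) (lam n))
    (M : ℝ) (hM : M = max (dist (x 0) p) (dist u p))
    (l : ℝ)
    (hlamconst : ∀ n, lam n = l)
    (hbetaval : ∀ n : ℕ, beta n = 1 - 1 / (n + 1))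
    (K : ℕ) (hK : M ≤ (K : ℝ)) :
    ∀ k : ℕ, ∀ n ≥ 144 * K ^ 2 * (k + 1) ^ 2 + 6 * K * (k + 1),
      dist (x n) (x (n + 1)) ≤ 1 / (k + 1) := by
  have hTM : IsTikhonovMann H C T u lam beta x y :=
    ⟨hCconv, hTmaps, hTne, huC, hlam, hbeta, hx0, hy, hx⟩
  have hx0p : dist (x 0) p ≤ M := hM ▸ le_max_left _ _
  have hup : dist u p ≤ M := hM ▸ le_max_right _ _
  have hrate := hTM.natCast_mul_dist_le hpC hpfix hx0p hup (fun n ↦ by rw [hlamconst, hlamconst])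
    hbetaval
  intro k n hn
  -- for `K = 0` the bound on `n aₙ` is empty at `n = 0`, but then `M = 0` pins every `xₙ` to `p`
  rcases K.eq_zero_or_pos with rfl | hKpos
  · calc dist (x n) (x (n + 1)) ≤ dist (x n) p + dist (x (n + 1)) p := dist_triangle_right _ _ _
      _ ≤ 0 := by
        linarith [hTM.dist_x_le hpC hpfix hx0p hup n, hTM.dist_x_le hpC hpfix hx0p hup (n + 1),
          (by simpa using hK : M ≤ 0)]
      _ ≤ 1 / (k + 1) := by positivity
  exact le_one_div_of_mul_le_four_mul_sqrt hK hKpos hn (hrate n)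

theorem tm_quadratic_as_reg
    {X : Type*} [MetricSpace X] (H : WHyp X) (C : Set X)
    (hCconv : ∀ x ∈ C, ∀ y ∈ C, ∀ l ∈ Set.Icc (0:ℝ) 1, H.W x y l ∈ C)
    (T : X → X) (hTmaps : ∀ x ∈ C, T x ∈ C)
    (hTne : ∀ x ∈ C, ∀ y ∈ C, dist (T x) (T y) ≤ dist x y)
    (p : X) (hpC : p ∈ C) (hpfix : T p = p)
    (u : X) (huC : u ∈ C)
    (lam beta : ℕ → ℝ)
    (hlam : ∀ n, lam n ∈ Set.Icc (0:ℝ) 1) (hbeta : ∀ n, beta n ∈ Set.Icc (0:ℝ) 1)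
    (x y : ℕ → X) (hx0 : x 0 ∈ C)
    (hy : ∀ n, y n = H.W u (x n) (beta n))
    (hx : ∀ n, x (n + 1) = H.W (y n) (T (y n)) (lam n))
    (M : ℝ) (hM : M = max (dist (x 0) p) (dist u p))
    (l : ℝ) (hl : l ∈ Set.Ioc (0:ℝ) 1)
    (hlamconst : ∀ n, lam n = l)
    (hbetaval : ∀ n : ℕ, beta n = 1 - 1 / (n + 1))
    (K : ℕ) (hK : M ≤ (K : ℝ)) :
    ∀ k : ℕ, ∀ n ≥ 144 * K ^ 2 * (k + 1) ^ 2 + 6 * K * (k + 1),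
      dist (x n) (x (n + 1)) ≤ 1 / (k + 1) :=
  tm_quadratic_as_reg_general H C hCconv T hTmaps hTne p hpC hpfix u huC lam beta hlam hbeta x y hx0
    hy hx M hM l hlamconst hbetaval K hK
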